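/- Let ψ = e^{πi/4} (a primitive 8th root of unity) and consider the matrices S_1 (the permutation matrix exchanging x_0 ↔ x_2 and x_1 ↔ x_3), S_2 (the permutation matrix exchanging x_0 ↔ x_1 and x_2 ↔ x_3), T_1 = diag(1,1,−1,−1), T_2 = diag(1,−1,1,−1), T = (ψ/√2)·[[−i,0,0,i],[0,1,1,0],[1,0,0,1],[0,−i,i,0]], and B = ψ·diag(1,1,1,−1) (the generators of the primitive group (19°) ≅ ℤ_2^4.𝔖_5 of order 1920 in PGL_4(ℂ)). Then the quartic k = x_0^4 + x_1^4 + x_2^4 + x_3^4 + 6(x_0^2x_1^2 − x_1^2x_2^2 + x_1^2x_3^2 + x_0^2x_2^2 − x_0^2x_3^2 + x_2^2x_3^2) is invariant under each of these matrices: for every M ∈ {S_1, S_2, T_1, T_2, T, B} there exists λ ∈ ℂ* with k(Mx) = λ·k(x). -/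
import Mathlib


open MvPolynomial Complex

/-- The action of a matrix on a polynomial: `(A f)(x) = f (A x)`. -/
noncomputable def matAct {N : ℕ} (A : Matrix (Fin N) (Fin N) ℂ)
    (f : MvPolynomial (Fin N) ℂ) : MvPolynomial (Fin N) ℂ :=
  MvPolynomial.aeval (fun i => ∑ j, MvPolynomial.C (A i j) * MvPolynomial.X j) f

/-- `ψ = e^{πi/4}`, a primitive 8th root of unity. -/
noncomputable def ψ : ℂ := Complex.exp (Real.pi * Complex.I / 4)

/-- `S₁`: the permutation matrix exchanging `x₀ ↔ x₂` and `x₁ ↔ x₃`. -/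
def S₁ : Matrix (Fin 4) (Fin 4) ℂ :=
  !![0, 0, 1, 0; 0, 0, 0, 1; 1, 0, 0, 0; 0, 1, 0, 0]

/-- `S₂`: the permutation matrix exchanging `x₀ ↔ x₁` and `x₂ ↔ x₃`. -/
def S₂ : Matrix (Fin 4) (Fin 4) ℂ :=
  !![0, 1, 0, 0; 1, 0, 0, 0; 0, 0, 0, 1; 0, 0, 1, 0]

/-- `T₁ = diag(1, 1, −1, −1)`. -/
def T₁ : Matrix (Fin 4) (Fin 4) ℂ :=
  !![1, 0, 0, 0; 0, 1, 0, 0; 0, 0, -1, 0; 0, 0, 0, -1]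

/-- `T₂ = diag(1, −1, 1, −1)`. -/
def T₂ : Matrix (Fin 4) (Fin 4) ℂ :=
  !![1, 0, 0, 0; 0, -1, 0, 0; 0, 0, 1, 0; 0, 0, 0, -1]

/-- `T = (ψ/√2)·[[−i,0,0,i],[0,1,1,0],[1,0,0,1],[0,−i,i,0]]`. -/
noncomputable def Tmat : Matrix (Fin 4) (Fin 4) ℂ :=
  (ψ / (Real.sqrt 2 : ℂ)) •
    !![-Complex.I, 0, 0, Complex.I; 0, 1, 1, 0; 1, 0, 0, 1;
       0, -Complex.I, Complex.I, 0]

/-- `B = ψ·diag(1, 1, 1, −1)`. -/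
noncomputable def Bmat : Matrix (Fin 4) (Fin 4) ℂ :=
  ψ • !![1, 0, 0, 0; 0, 1, 0, 0; 0, 0, 1, 0; 0, 0, 0, -1]

/-- The quartic form
`k = x₀⁴ + x₁⁴ + x₂⁴ + x₃⁴ + 6(x₀²x₁² − x₁²x₂² + x₁²x₃² + x₀²x₂² − x₀²x₃² + x₂²x₃²)`. -/
noncomputable def kQuartic : MvPolynomial (Fin 4) ℂ :=
  X 0 ^ 4 + X 1 ^ 4 + X 2 ^ 4 + X 3 ^ 4 +
    6 * (X 0 ^ 2 * X 1 ^ 2 - X 1 ^ 2 * X 2 ^ 2 + X 1 ^ 2 * X 3 ^ 2 +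
      X 0 ^ 2 * X 2 ^ 2 - X 0 ^ 2 * X 3 ^ 2 + X 2 ^ 2 * X 3 ^ 2)

lemma psi_eq : ψ = (Real.sqrt 2 : ℂ) / 2 * (1 + Complex.I) := by
  rw [ψ]
  have h : (↑Real.pi * Complex.I / 4) = ((Real.pi / 4 : ℝ) : ℂ) * Complex.I := by
    push_cast; ring
  rw [h, Complex.exp_mul_I, ← Complex.ofReal_cos, ← Complex.ofReal_sin,
    Real.cos_pi_div_four, Real.sin_pi_div_four]
  push_cast; ring

lemma sqrt2_sq : ((Real.sqrt 2 : ℝ) : ℂ) ^ 2 = 2 := by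
  norm_cast
  rw [Real.sq_sqrt] ; norm_num

lemma sqrt2_ne : ((Real.sqrt 2 : ℝ) : ℂ) ≠ 0 := by
  simp [Real.sqrt_eq_zero']

lemma psi_div_sqrt2 : ψ / (Real.sqrt 2 : ℂ) = (1 + Complex.I) / 2 := by
  rw [psi_eq, div_eq_div_iff sqrt2_ne two_ne_zero]
  ring

lemma psi_sq : ψ ^ 2 = Complex.I := by
  rw [psi_eq]
  linear_combination ((1 + Complex.I) ^ 2 / 4) * sqrt2_sq + (1 / 2 : ℂ) * Complex.I_sq

lemma psi_pow_four : ψ ^ 4 = -1 := by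
  rw [show (4 : ℕ) = 2 * 2 from rfl, pow_mul, psi_sq, Complex.I_sq]

theorem stmt12 :
    ∀ M ∈ ({S₁, S₂, T₁, T₂, Tmat, Bmat} : Set (Matrix (Fin 4) (Fin 4) ℂ)),
      ∃ c : ℂ, c ≠ 0 ∧ matAct M kQuartic = c • kQuartic := by
  have key : ∀ (M : Matrix (Fin 4) (Fin 4) ℂ) (c : ℂ),
      (∀ x : Fin 4 → ℂ, eval x (matAct M kQuartic) = c * eval x kQuartic) →
      matAct M kQuartic = c • kQuartic := by
    intro M c h
    apply MvPolynomial.funext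
    intro x
    rw [h x, smul_eval]
  intro M hM
  simp only [Set.mem_insert_iff, Set.mem_singleton_iff] at hM
  rcases hM with rfl | rfl | rfl | rfl | rfl | rfl
  · refine ⟨1, one_ne_zero, key _ _ fun x => ?_⟩
    simp only [matAct, kQuartic, S₁, map_add, map_sub, map_mul, map_pow, map_ofNat, aeval_X,
      eval_add, eval_sub, eval_mul, eval_pow, eval_X, eval_C, eval_ofNat,
      Fin.sum_univ_four, Matrix.cons_val', Matrix.cons_val_zero, Matrix.cons_val_one,
      Matrix.head_cons, Matrix.head_fin_const, Matrix.empty_val', Matrix.cons_val_fin_one,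
      Matrix.cons_val_two, Matrix.cons_val_three, Matrix.tail_cons, Matrix.of_apply]
    ring
  · refine ⟨1, one_ne_zero, key _ _ fun x => ?_⟩
    simp only [matAct, kQuartic, S₂, map_add, map_sub, map_mul, map_pow, map_ofNat, aeval_X,
      eval_add, eval_sub, eval_mul, eval_pow, eval_X, eval_C, eval_ofNat,
      Fin.sum_univ_four, Matrix.cons_val', Matrix.cons_val_zero, Matrix.cons_val_one,
      Matrix.head_cons, Matrix.head_fin_const, Matrix.empty_val', Matrix.cons_val_fin_one,
      Matrix.cons_val_two, Matrix.cons_val_three, Matrix.tail_cons, Matrix.of_apply]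
    ring
  · refine ⟨1, one_ne_zero, key _ _ fun x => ?_⟩
    simp only [matAct, kQuartic, T₁, map_add, map_sub, map_mul, map_pow, map_ofNat, aeval_X,
      eval_add, eval_sub, eval_mul, eval_pow, eval_X, eval_C, eval_ofNat,
      Fin.sum_univ_four, Matrix.cons_val', Matrix.cons_val_zero, Matrix.cons_val_one,
      Matrix.head_cons, Matrix.head_fin_const, Matrix.empty_val', Matrix.cons_val_fin_one,
      Matrix.cons_val_two, Matrix.cons_val_three, Matrix.tail_cons, Matrix.of_apply]
    ring
  · refine ⟨1, one_ne_zero, key _ _ fun x => ?_⟩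
    simp only [matAct, kQuartic, T₂, map_add, map_sub, map_mul, map_pow, map_ofNat, aeval_X,
      eval_add, eval_sub, eval_mul, eval_pow, eval_X, eval_C, eval_ofNat,
      Fin.sum_univ_four, Matrix.cons_val', Matrix.cons_val_zero, Matrix.cons_val_one,
      Matrix.head_cons, Matrix.head_fin_const, Matrix.empty_val', Matrix.cons_val_fin_one,
      Matrix.cons_val_two, Matrix.cons_val_three, Matrix.tail_cons, Matrix.of_apply]
    ring
  · refine ⟨1, one_ne_zero, key _ _ fun x => ?_⟩
    simp only [matAct, kQuartic, Tmat, psi_div_sqrt2, Matrix.smul_apply, smul_eq_mul,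
      map_add, map_sub, map_mul, map_pow, map_ofNat, aeval_X,
      eval_add, eval_sub, eval_mul, eval_pow, eval_X, eval_C, eval_ofNat,
      Fin.sum_univ_four, Matrix.cons_val', Matrix.cons_val_zero, Matrix.cons_val_one,
      Matrix.head_cons, Matrix.head_fin_const, Matrix.empty_val', Matrix.cons_val_fin_one,
      Matrix.cons_val_two, Matrix.cons_val_three, Matrix.tail_cons, Matrix.of_apply]
    linear_combination ((-15/16:ℂ)*x 3^4 + (1/4:ℂ)*x 3^4*Complex.I + (27/16:ℂ)*x 3^4*Complex.I^2 + (3/2:ℂ)*x 3^4*Complex.I^3 + (11/16:ℂ)*x 3^4*Complex.I^4 + (1/4:ℂ)*x 3^4*Complex.I^5 + (1/16:ℂ)*x 3^4*Complex.I^6 + (-51/8:ℂ)*x 2^2*x 3^2 + (-3/2:ℂ)*x 2^2*x 3^2*Complex.I + (39/8:ℂ)*x 2^2*x 3^2*Complex.I^2 + (3/1:ℂ)*x 2^2*x 3^2*Complex.I^3 + (-9/8:ℂ)*x 2^2*x 3^2*Complex.I^4 + (-3/2:ℂ)*x 2^2*x 3^2*Complex.I^5 + (-3/8:ℂ)*x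 2^2*x 3^2*Complex.I^6 + (-15/16:ℂ)*x 2^4 + (1/4:ℂ)*x 2^4*Complex.I + (27/16:ℂ)*x 2^4*Complex.I^2 + (3/2:ℂ)*x 2^4*Complex.I^3 + (11/16:ℂ)*x 2^4*Complex.I^4 + (1/4:ℂ)*x 2^4*Complex.I^5 + (1/16:ℂ)*x 2^4*Complex.I^6 + (-3/4:ℂ)*x 1*x 2*x 3^2 + (-3/1:ℂ)*x 1*x 2*x 3^2*Complex.I + (-15/4:ℂ)*x 1*x 2*x 3^2*Complex.I^2 + (15/4:ℂ)*x 1*x 2*x 3^2*Complex.I^4 + (3/1:ℂ)*x 1*x 2*x 3^2*Complex.I^5 + (3/4:ℂ)*x 1*x 2*x 3^2*Complex.I^6 + (1/4:ℂ)*x 1*x 2^3 + (1/1:ℂ)*x 1*x 2^3*Complex.I + (5/4:ℂ)*x 1*x 2^3*Complex.I^2 + (-5/4:ℂ)*x 1*x 2^3*Complex.I^4 + (-1/1:ℂ)*x 1*x 2^3*Complex.I^5 + (-1/4:ℂ)*x 1*x 2^3*Complex.I^6 + (-51/8:ℂ)*x 1^2*x 3^2 + (-3/2:ℂ)*x 1^2*x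 3^2*Complex.I + (39/8:ℂ)*x 1^2*x 3^2*Complex.I^2 + (3/1:ℂ)*x 1^2*x 3^2*Complex.I^3 + (-9/8:ℂ)*x 1^2*x 3^2*Complex.I^4 + (-3/2:ℂ)*x 1^2*x 3^2*Complex.I^5 + (-3/8:ℂ)*x 1^2*x 3^2*Complex.I^6 + (51/8:ℂ)*x 1^2*x 2^2 + (3/2:ℂ)*x 1^2*x 2^2*Complex.I + (-39/8:ℂ)*x 1^2*x 2^2*Complex.I^2 + (-3/1:ℂ)*x 1^2*x 2^2*Complex.I^3 + (9/8:ℂ)*x 1^2*x 2^2*Complex.I^4 + (3/2:ℂ)*x 1^2*x 2^2*Complex.I^5 + (3/8:ℂ)*x 1^2*x 2^2*Complex.I^6 + (1/4:ℂ)*x 1^3*x 2 + (1/1:ℂ)*x 1^3*x 2*Complex.I + (5/4:ℂ)*x 1^3*x 2*Complex.I^2 + (-5/4:ℂ)*x 1^3*x 2*Complex.I^4 + (-1/1:ℂ)*x 1^3*x 2*Complex.I^5 + (-1/4:ℂ)*x 1^3*x 2*Complex.I^6 + (-15/16:ℂ)*x 1^4 + (1/4:ℂ)*x 1^4*Complex.I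 + (27/16:ℂ)*x 1^4*Complex.I^2 + (3/2:ℂ)*x 1^4*Complex.I^3 + (11/16:ℂ)*x 1^4*Complex.I^4 + (1/4:ℂ)*x 1^4*Complex.I^5 + (1/16:ℂ)*x 1^4*Complex.I^6 + (1/4:ℂ)*x 0*x 3^3 + (1/1:ℂ)*x 0*x 3^3*Complex.I + (5/4:ℂ)*x 0*x 3^3*Complex.I^2 + (-5/4:ℂ)*x 0*x 3^3*Complex.I^4 + (-1/1:ℂ)*x 0*x 3^3*Complex.I^5 + (-1/4:ℂ)*x 0*x 3^3*Complex.I^6 + (-3/4:ℂ)*x 0*x 2^2*x 3 + (-3/1:ℂ)*x 0*x 2^2*x 3*Complex.I + (-15/4:ℂ)*x 0*x 2^2*x 3*Complex.I^2 + (15/4:ℂ)*x 0*x 2^2*x 3*Complex.I^4 + (3/1:ℂ)*x 0*x 2^2*x 3*Complex.I^5 + (3/4:ℂ)*x 0*x 2^2*x 3*Complex.I^6 + (-3/2:ℂ)*x 0*x 1*x 2*x 3 + (-6/1:ℂ)*x 0*x 1*x 2*x 3*Complex.I + (-21/2:ℂ)*x 0*x 1*x 2*x 3*Complex.I^2 +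 (-12/1:ℂ)*x 0*x 1*x 2*x 3*Complex.I^3 + (-21/2:ℂ)*x 0*x 1*x 2*x 3*Complex.I^4 + (-6/1:ℂ)*x 0*x 1*x 2*x 3*Complex.I^5 + (-3/2:ℂ)*x 0*x 1*x 2*x 3*Complex.I^6 + (-3/4:ℂ)*x 0*x 1^2*x 3 + (-3/1:ℂ)*x 0*x 1^2*x 3*Complex.I + (-15/4:ℂ)*x 0*x 1^2*x 3*Complex.I^2 + (15/4:ℂ)*x 0*x 1^2*x 3*Complex.I^4 + (3/1:ℂ)*x 0*x 1^2*x 3*Complex.I^5 + (3/4:ℂ)*x 0*x 1^2*x 3*Complex.I^6 + (51/8:ℂ)*x 0^2*x 3^2 + (3/2:ℂ)*x 0^2*x 3^2*Complex.I + (-39/8:ℂ)*x 0^2*x 3^2*Complex.I^2 + (-3/1:ℂ)*x 0^2*x 3^2*Complex.I^3 + (9/8:ℂ)*x 0^2*x 3^2*Complex.I^4 + (3/2:ℂ)*x 0^2*x 3^2*Complex.I^5 + (3/8:ℂ)*x 0^2*x 3^2*Complex.I^6 + (-51/8:ℂ)*x 0^2*x 2^2 + (-3/2:ℂ)*x 0^2*x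 2^2*Complex.I + (39/8:ℂ)*x 0^2*x 2^2*Complex.I^2 + (3/1:ℂ)*x 0^2*x 2^2*Complex.I^3 + (-9/8:ℂ)*x 0^2*x 2^2*Complex.I^4 + (-3/2:ℂ)*x 0^2*x 2^2*Complex.I^5 + (-3/8:ℂ)*x 0^2*x 2^2*Complex.I^6 + (-3/4:ℂ)*x 0^2*x 1*x 2 + (-3/1:ℂ)*x 0^2*x 1*x 2*Complex.I + (-15/4:ℂ)*x 0^2*x 1*x 2*Complex.I^2 + (15/4:ℂ)*x 0^2*x 1*x 2*Complex.I^4 + (3/1:ℂ)*x 0^2*x 1*x 2*Complex.I^5 + (3/4:ℂ)*x 0^2*x 1*x 2*Complex.I^6 + (-51/8:ℂ)*x 0^2*x 1^2 + (-3/2:ℂ)*x 0^2*x 1^2*Complex.I + (39/8:ℂ)*x 0^2*x 1^2*Complex.I^2 + (3/1:ℂ)*x 0^2*x 1^2*Complex.I^3 + (-9/8:ℂ)*x 0^2*x 1^2*Complex.I^4 + (-3/2:ℂ)*x 0^2*x 1^2*Complex.I^5 + (-3/8:ℂ)*x 0^2*x 1^2*Complex.I^6 + (1/4:ℂ)*x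 0^3*x 3 + (1/1:ℂ)*x 0^3*x 3*Complex.I + (5/4:ℂ)*x 0^3*x 3*Complex.I^2 + (-5/4:ℂ)*x 0^3*x 3*Complex.I^4 + (-1/1:ℂ)*x 0^3*x 3*Complex.I^5 + (-1/4:ℂ)*x 0^3*x 3*Complex.I^6 + (-15/16:ℂ)*x 0^4 + (1/4:ℂ)*x 0^4*Complex.I + (27/16:ℂ)*x 0^4*Complex.I^2 + (3/2:ℂ)*x 0^4*Complex.I^3 + (11/16:ℂ)*x 0^4*Complex.I^4 + (1/4:ℂ)*x 0^4*Complex.I^5 + (1/16:ℂ)*x 0^4*Complex.I^6 ) * Complex.I_sq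
  · refine ⟨-1, by norm_num, key _ _ fun x => ?_⟩
    simp only [matAct, kQuartic, Bmat, Matrix.smul_apply, smul_eq_mul,
      map_add, map_sub, map_mul, map_pow, map_ofNat, aeval_X,
      eval_add, eval_sub, eval_mul, eval_pow, eval_X, eval_C, eval_ofNat,
      Fin.sum_univ_four, Matrix.cons_val', Matrix.cons_val_zero, Matrix.cons_val_one,
      Matrix.head_cons, Matrix.head_fin_const, Matrix.empty_val', Matrix.cons_val_fin_one,
      Matrix.cons_val_two, Matrix.cons_val_three, Matrix.tail_cons, Matrix.of_apply]
    linear_combination (x 0 ^ 4 + x 1 ^ 4 + x 2 ^ 4 + x 3 ^ 4 +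
      6 * (x 0 ^ 2 * x 1 ^ 2 - x 1 ^ 2 * x 2 ^ 2 + x 1 ^ 2 * x 3 ^ 2 +
        x 0 ^ 2 * x 2 ^ 2 - x 0 ^ 2 * x 3 ^ 2 + x 2 ^ 2 * x 3 ^ 2)) * psi_pow_four
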